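/- With G(d,h) the sandpile group of the d-regular tree of depth h and j a vertex at depth n (1 ≤ n ≤ h), the relation θ(d, h+2−n)·x̄_j − θ(d, h+1−n)·x̄_{p(j)} = 0 holds in G(d,h), where θ(d,m) := ((d−1)^m − 1)/(d−2) and x̄ denotes the image in G(d,h). -/

import Mathlib

namespace SandpileTree

/-- Vertices of the rooted `d`-regular tree of depth `h`: a depth `n ≤ h` together with
the path of steps from the root, padded with value `0` beyond the depth.
The step out of the root has `d` choices; each later step has `d - 1` choices. -/
def Vert (d h : ℕ) : Type :=
  {p : Fin (h + 1) × (Fin h → Fin d) //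
    (∀ i : Fin h, (p.1 : ℕ) ≤ (i : ℕ) → (p.2 i : ℕ) = 0) ∧
    (∀ i : Fin h, 0 < (i : ℕ) → (i : ℕ) < (p.1 : ℕ) → (p.2 i : ℕ) < d - 1)}

instance (d h : ℕ) : DecidableEq (Vert d h) := by unfold Vert; infer_instance
instance (d h : ℕ) : Fintype (Vert d h) := by unfold Vert; infer_instance

/-- The depth (distance from the root) of a vertex. -/
def depth {d h : ℕ} (v : Vert d h) : ℕ := (v.1.1 : ℕ)

/-- The root of the tree. -/
def root (d h : ℕ) (hd : 0 < d) : Vert d h :=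
  ⟨(0, fun _ => ⟨0, hd⟩), by constructor <;> intro i <;> simp⟩

/-- `IsParent i j` means that `i` is the parent of `j` in the rooted tree. -/
def IsParent {d h : ℕ} (i j : Vert d h) : Prop :=
  depth j = depth i + 1 ∧ ∀ k : Fin h, (k : ℕ) < depth i → j.1.2 k = i.1.2 k

instance {d h : ℕ} (i j : Vert d h) : Decidable (IsParent i j) := by
  unfold IsParent; infer_instance

/-- The row of the reduced Laplacian of the augmented tree corresponding to vertex `i`:
`δ i = d·x_i − x_{parent i} − ∑_{j child of i} x_j` (no parent term for the root, and
no children terms for the leaves, which are attached to the sink by `d-1` edges). -/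
def delta (d h : ℕ) (i : Vert d h) : Vert d h → ℤ :=
  (d : ℤ) • Pi.single i 1
    - ∑ j ∈ Finset.univ.filter (fun j => IsParent j i), Pi.single j 1
    - ∑ j ∈ Finset.univ.filter (fun j => IsParent i j), Pi.single j 1

/-- The lattice `Λ ⊆ ℤ^V` spanned by the rows of the reduced Laplacian. -/
def lat (d h : ℕ) : AddSubgroup (Vert d h → ℤ) :=
  AddSubgroup.closure (Set.range (delta d h))

/-- The sandpile group `G(d,h) = ℤ^V / Λ` of the `d`-regular tree of depth `h`. -/
abbrev SG (d h : ℕ) : Type := (Vert d h → ℤ) ⧸ lat d h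

/-- The image `x̄ᵢ` of the standard basis vector `xᵢ` in the sandpile group. -/
def xbar (d h : ℕ) (i : Vert d h) : SG d h :=
  QuotientAddGroup.mk (Pi.single i 1)

/-- `θ(d,n) = ((d-1)^n - 1)/(d-2)`. -/
def theta (d n : ℕ) : ℕ := ((d - 1) ^ n - 1) / (d - 2)

end SandpileTree

/-!
Write `T k = θ(d,k)`, so that `T (k+2) = d·T (k+1) − (d−1)·T k`, and let `t = h − depth v`.
Induct on `t`, proving `T (t+2)·x̄_v = T (t+1)·x̄_{p(v)}`. The relation `δ_v ∈ Λ` reads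
`d·x̄_v = x̄_{p(v)} + ∑_c x̄_c` over the children `c` of `v`; multiplying it by `T (t+1)`,
the recurrence reduces the claim to `T (t+1)·∑_c x̄_c = (d−1)·T t·x̄_v`. For a leaf both
sides vanish (no children, `T 0 = 0`); otherwise each of the `d − 1` children satisfies
`T (t+1)·x̄_c = T t·x̄_v` by the induction hypothesis.
-/

namespace SandpileTree

variable {d h : ℕ}

section Theta

lemma theta_eq_geomSum (hd : 3 ≤ d) (k : ℕ) :
    theta d k = ∑ i ∈ Finset.range k, (d - 1) ^ i := by
  rw [theta, Nat.geomSum_eq (by omega), Nat.sub_sub]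

lemma theta_zero (d : ℕ) : theta d 0 = 0 := by simp [theta]

lemma theta_succ (hd : 3 ≤ d) (k : ℕ) : theta d (k + 1) = (d - 1) * theta d k + 1 := by
  rw [theta_eq_geomSum hd, theta_eq_geomSum hd, geom_sum_succ]

lemma theta_add_two (hd : 3 ≤ d) (k : ℕ) :
    (theta d (k + 2) : ℤ) = d * theta d (k + 1) - (d - 1) * theta d k := by
  have h₁ := theta_succ hd k
  have h₂ := theta_succ hd (k + 1)
  zify [show 1 ≤ d by omega] at h₁ h₂
  linear_combination h₂ - h₁

end Theta

section Tree

lemma depth_le (v : Vert d h) : depth v ≤ h := Nat.lt_succ_iff.mp v.1.1.isLt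

lemma Vert.ext_of_depth {v w : Vert d h} (hdepth : depth v = depth w)
    (hstep : ∀ k : Fin h, (k : ℕ) < depth v → v.1.2 k = w.1.2 k) : v = w := by
  refine Subtype.ext (Prod.ext (Fin.ext hdepth) (funext fun k => ?_))
  by_cases hk : (k : ℕ) < depth v
  · exact hstep k hk
  · exact Fin.ext <| by
      rw [v.2.1 k (show depth v ≤ k by omega), w.2.1 k (show depth w ≤ k by omega)]

lemma IsParent.depth_pos {i v : Vert d h} (hi : IsParent i v) : 1 ≤ depth v := by
  rw [hi.1]; omega

lemma IsParent.unique {i i' v : Vert d h} (hi : IsParent i v) (hi' : IsParent i' v) : i = i' := by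
  have hdepth : depth i = depth i' := by have := hi.1; have := hi'.1; omega
  exact Vert.ext_of_depth hdepth fun k hk => (hi.2 k hk).symm.trans (hi'.2 k (hdepth ▸ hk))

lemma filter_isParent_eq_singleton {i v : Vert d h} (hi : IsParent i v) :
    Finset.univ.filter (fun j => IsParent j v) = {i} := by
  ext j
  simpa using ⟨fun hj => hj.unique hi, fun hj => hj ▸ hi⟩

def children (v : Vert d h) : Finset (Vert d h) := Finset.univ.filter (IsParent v)

lemma mem_children {v w : Vert d h} : w ∈ children v ↔ IsParent v w := by simp [children]

def childSteps (v : Vert d h) (hv : depth v < h) (t : Fin (d - 1)) : Fin h → Fin d :=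
  Function.update v.1.2 ⟨depth v, hv⟩ (Fin.castLE (Nat.sub_le d 1) t)

lemma childSteps_of_ne {v : Vert d h} {hv : depth v < h} {k : Fin h} (hk : (k : ℕ) ≠ depth v)
    (t : Fin (d - 1)) : childSteps v hv t k = v.1.2 k :=
  Function.update_of_ne (fun hk' => hk (congrArg Fin.val hk')) _ _

lemma childSteps_self (v : Vert d h) (hv : depth v < h) (t : Fin (d - 1)) :
    (childSteps v hv t ⟨depth v, hv⟩ : ℕ) = t := by
  simp [childSteps]

def child (v : Vert d h) (hv : depth v < h) (t : Fin (d - 1)) : Vert d h :=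
  ⟨(⟨depth v + 1, by omega⟩, childSteps v hv t), by
    constructor
    · intro k (hk : depth v + 1 ≤ k)
      show (childSteps v hv t k : ℕ) = 0
      rw [childSteps_of_ne (by omega)]
      exact v.2.1 k (show depth v ≤ k by omega)
    · intro k hk₀ (hk : (k : ℕ) < depth v + 1)
      rcases eq_or_ne (k : ℕ) (depth v) with hkv | hkv
      · obtain rfl : k = ⟨depth v, hv⟩ := Fin.ext hkv
        exact (childSteps_self v hv t).trans_lt t.2
      · show (childSteps v hv t k : ℕ) < d - 1
        rw [childSteps_of_ne hkv]
        exact v.2.2 k hk₀ (show k < depth v by omega)⟩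

lemma isParent_child (v : Vert d h) (hv : depth v < h) (t : Fin (d - 1)) :
    IsParent v (child v hv t) :=
  ⟨rfl, fun _ hk => childSteps_of_ne hk.ne t⟩

lemma child_injective (v : Vert d h) (hv : depth v < h) : Function.Injective (child v hv) :=
  fun t t' htt => Fin.ext <| by
    rw [← childSteps_self v hv t, ← childSteps_self v hv t']
    exact congrArg (fun w : Vert d h => (w.1.2 ⟨depth v, hv⟩ : ℕ)) htt

lemma exists_eq_child {v w : Vert d h} (hv : depth v < h) (hv₀ : 1 ≤ depth v)
    (hw : IsParent v w) : ∃ t, w = child v hv t := by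
  have ht : (w.1.2 ⟨depth v, hv⟩ : ℕ) < d - 1 :=
    w.2.2 _ hv₀ (show depth v < depth w by rw [hw.1]; omega)
  refine ⟨⟨_, ht⟩, Vert.ext_of_depth hw.1 fun k hk => ?_⟩
  rw [hw.1] at hk
  rcases eq_or_ne (k : ℕ) (depth v) with hkv | hkv
  · obtain rfl : k = ⟨depth v, hv⟩ := Fin.ext hkv
    exact Fin.ext (childSteps_self v hv ⟨_, ht⟩).symm
  · exact (hw.2 k (by omega)).trans (childSteps_of_ne hkv _).symm

lemma card_children {v : Vert d h} (hv : depth v < h) (hv₀ : 1 ≤ depth v) :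
    (children v).card = d - 1 := by
  have : children v = Finset.univ.image (child v hv) := by
    ext w
    simp only [mem_children, Finset.mem_image, Finset.mem_univ, true_and]
    exact ⟨fun hw => (exists_eq_child hv hv₀ hw).imp fun _ => Eq.symm,
      by rintro ⟨t, rfl⟩; exact isParent_child v hv t⟩
  rw [this, Finset.card_image_of_injective _ (child_injective v hv), Finset.card_univ,
    Fintype.card_fin]

lemma children_eq_empty {v : Vert d h} (hv : depth v = h) : children v = ∅ :=
  Finset.eq_empty_of_forall_notMem fun w hw => by
    have := (mem_children.mp hw).1; have := depth_le w; omega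

end Tree

section Relations

lemma smul_xbar_eq_add_sum {i v : Vert d h} (hi : IsParent i v) :
    (d : ℤ) • xbar d h v = xbar d h i + ∑ c ∈ children v, xbar d h c := by
  have hmem : delta d h v ∈ lat d h := AddSubgroup.subset_closure ⟨v, rfl⟩
  have := (QuotientAddGroup.eq_zero_iff _).mpr hmem
  rw [delta, filter_isParent_eq_singleton hi, Finset.sum_singleton, QuotientAddGroup.mk_sub,
    QuotientAddGroup.mk_sub, QuotientAddGroup.mk_zsmul, sub_sub, sub_eq_zero] at this
  simpa [xbar, children, QuotientAddGroup.mk_sum] using this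

lemma theta_smul_xbar_of_sum_children (hd : 3 ≤ d) (t : ℕ) {i v : Vert d h} (hi : IsParent i v)
    (hchildren : (theta d (t + 1) : ℤ) • ∑ c ∈ children v, xbar d h c
      = ((d - 1) * theta d t : ℤ) • xbar d h v) :
    (theta d (t + 2) : ℤ) • xbar d h v = (theta d (t + 1) : ℤ) • xbar d h i := by
  calc (theta d (t + 2) : ℤ) • xbar d h v
      = (theta d (t + 1) : ℤ) • ((d : ℤ) • xbar d h v)
          - ((d - 1) * theta d t : ℤ) • xbar d h v := by
        rw [theta_add_two hd, sub_smul, smul_smul, mul_comm]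
    _ = (theta d (t + 1) : ℤ) • xbar d h i
          + ((theta d (t + 1) : ℤ) • ∑ c ∈ children v, xbar d h c
            - ((d - 1) * theta d t : ℤ) • xbar d h v) := by
        rw [smul_xbar_eq_add_sum hi, zsmul_add]; abel
    _ = (theta d (t + 1) : ℤ) • xbar d h i := by rw [hchildren, sub_self, add_zero]

theorem theta_smul_xbar_eq (hd : 3 ≤ d) {i v : Vert d h} (hi : IsParent i v) :
    (theta d (h - depth v + 2) : ℤ) • xbar d h v
      = (theta d (h - depth v + 1) : ℤ) • xbar d h i := by
  obtain ⟨t, ht⟩ : ∃ t, h - depth v = t := ⟨_, rfl⟩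
  rw [ht]
  induction t generalizing i v with
  | zero =>
    refine theta_smul_xbar_of_sum_children hd 0 hi ?_
    rw [children_eq_empty (by have := depth_le v; omega), theta_zero]
    simp
  | succ t ih =>
    refine theta_smul_xbar_of_sum_children hd (t + 1) hi ?_
    have hchild : ∀ c ∈ children v,
        (theta d (t + 2) : ℤ) • xbar d h c = (theta d (t + 1) : ℤ) • xbar d h v :=
      fun c hc => ih (mem_children.mp hc) (by rw [(mem_children.mp hc).1]; omega)
    calc (theta d (t + 2) : ℤ) • ∑ c ∈ children v, xbar d h c
        = ∑ c ∈ children v, (theta d (t + 2) : ℤ) • xbar d h c :=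
          map_sum (zsmulAddGroupHom _) _ _
      _ = ((d - 1 : ℕ) : ℤ) • (theta d (t + 1) : ℤ) • xbar d h v := by
        rw [Finset.sum_congr rfl hchild, Finset.sum_const, card_children (by omega) hi.depth_pos]
        exact (natCast_zsmul _ _).symm
      _ = ((d - 1) * theta d (t + 1) : ℤ) • xbar d h v := by
        rw [smul_smul, Nat.cast_sub (by omega), Nat.cast_one]

end Relations

end SandpileTree

open SandpileTree

theorem parent_relation_general (d h n : ℕ) (hd : 3 ≤ d)
    (j i : Vert d h) (hj : depth j = n) (hij : IsParent i j) :
    (theta d (h + 2 - n) : ℤ) • xbar d h j - (theta d (h + 1 - n) : ℤ) • xbar d h i = 0 := by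
  subst hj
  have hle := depth_le j
  rw [show h + 2 - depth j = h - depth j + 2 by omega,
    show h + 1 - depth j = h - depth j + 1 by omega, sub_eq_zero]
  exact theta_smul_xbar_eq hd hij

/-- In the sandpile group `G(d,h)` of the `d`-regular tree of depth `h`, for a vertex `j`
at depth `n` (`1 ≤ n ≤ h`) with parent `i = p(j)`, the relation
`θ(d, h+2−n)·x̄_j − θ(d, h+1−n)·x̄_{p(j)} = 0` holds. -/
theorem parent_relation (d h n : ℕ) (hd : 3 ≤ d) (hn : 1 ≤ n) (hnh : n ≤ h)
    (j i : Vert d h) (hj : depth j = n) (hij : IsParent i j) :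
    (theta d (h + 2 - n) : ℤ) • xbar d h j - (theta d (h + 1 - n) : ℤ) • xbar d h i = 0 :=
  parent_relation_general d h n hd j i hj hij
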